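/- arXiv:2007.11209 — 2 statements merged into one kernel-verified Lean document; each statement's English description precedes it below -/
import Mathlib

section
/- For any θ, θ̂, φ, φ̂ ∈ ℝ, if U = diag(1, e^{iφ}) · G(θ) and Û = diag(1, e^{iφ̂}) · G(θ̂) with G(α) = [[cos α, sin α], [−sin α, cos α]], then Tr((Û†U − I)†(Û†U − I)) = 4 − 2cos(θ − θ̂)·(1 + cos(φ − φ̂)). -/
open Matrix Complex

noncomputable def rotG (α : ℝ) : Matrix (Fin 2) (Fin 2) ℂ :=
  !![(Real.cos α : ℂ), (Real.sin α : ℂ);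
     (-(Real.sin α) : ℂ), (Real.cos α : ℂ)]

theorem postcoder_quantization_error_2x2
    (θ θhat φ φhat : ℝ)
    (U Uhat : Matrix (Fin 2) (Fin 2) ℂ)
    (hU : U = !![1, 0; 0, Complex.exp (Complex.I * φ)] * rotG θ)
    (hUhat : Uhat = !![1, 0; 0, Complex.exp (Complex.I * φhat)] * rotG θhat) :
    ((Uhatᴴ * U - 1)ᴴ * (Uhatᴴ * U - 1)).trace =
      (4 : ℂ) - 2 * Real.cos (θ - θhat) * (1 + Real.cos (φ - φhat)) := by
  subst hU hUhat
  simp only [rotG, Matrix.trace_fin_two, Matrix.mul_apply, Fin.sum_univ_two,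
    Matrix.conjTranspose_apply, Matrix.sub_apply, Matrix.one_apply,
    Matrix.cons_val', Matrix.cons_val_zero, Matrix.cons_val_one, Matrix.head_cons,
    Matrix.head_fin_const, Matrix.empty_val', Matrix.cons_val_fin_one]
  simp only [mul_comm Complex.I, Complex.exp_mul_I]
  simp only [Complex.ext_iff, Complex.add_re, Complex.add_im, Complex.mul_re, Complex.mul_im,
    Complex.sub_re, Complex.sub_im, Complex.ofReal_re, Complex.ofReal_im, Complex.one_re,
    Complex.one_im, Complex.I_re, Complex.I_im, _root_.map_add, _root_.map_mul, _root_.map_sub,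
    _root_.map_one, Complex.conj_re, Complex.conj_im, Complex.cos_ofReal_re,
    Complex.cos_ofReal_im, Complex.sin_ofReal_re, Complex.sin_ofReal_im]
  constructor
  · norm_num [Real.cos_sub, Real.sin_sub]
    simp only [Complex.cos_ofReal_re, Complex.sin_ofReal_re]
    linear_combination
      ((Real.sin θ ^ 2 + Real.cos θ ^ 2) *
          ((Real.sin φhat ^ 2 + Real.cos φhat ^ 2) * (Real.sin φ ^ 2 + Real.cos φ ^ 2) + 1)) *
        Real.sin_sq_add_cos_sq θhat +
      ((Real.sin φhat ^ 2 + Real.cos φhat ^ 2) * (Real.sin φ ^ 2 + Real.cos φ ^ 2) + 1) *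
        Real.sin_sq_add_cos_sq θ +
      (Real.sin φ ^ 2 + Real.cos φ ^ 2) * Real.sin_sq_add_cos_sq φhat +
      Real.sin_sq_add_cos_sq φ
  · norm_num [Real.cos_sub, Real.sin_sub]
    try simp only [Complex.cos_ofReal_re, Complex.sin_ofReal_re]
    try ring
end

section
/- If φ is uniformly distributed on (−π, π] and φ̂ is its uniform b-bit quantization, then E[|e^{iφ} − e^{iφ̂}|²] = 2 − 2·sinc(2^{−b}). -/
open Real MeasureTheory

/-- Uniform `b`-bit quantizer on `(-π, π]`: `φ` is mapped to the midpoint of the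
quantization cell of width `2π/2^b` containing it. -/
noncomputable def uniformQuantizer (b : ℕ) (φ : ℝ) : ℝ :=
  -π + ((⌈(φ + π) / (2 * π / 2 ^ b)⌉ : ℝ) - 1 / 2) * (2 * π / 2 ^ b)

/-!
Since `‖e^{iφ} - e^{iφ̂}‖² = 2 - 2 cos (φ - φ̂)`, only the error `φ - φ̂` matters. Shifting `φ` by
one cell width `Δ = 2π/2^b` shifts `φ̂` by `Δ` too, so the error is `Δ`-periodic and the integral
over `(-π, π]` is `2^b` times the integral over the first cell. There `φ̂` is the midpoint, and
the cell contributes `2Δ - 4 sin (Δ/2)`.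
-/

theorem norm_exp_I_mul_sub_exp_I_mul_sq (x y : ℝ) :
    ‖Complex.exp (Complex.I * x) - Complex.exp (Complex.I * y)‖ ^ 2 = 2 - 2 * cos (x - y) := by
  rw [mul_comm Complex.I, mul_comm Complex.I, Complex.exp_mul_I, Complex.exp_mul_I,
    Complex.sq_norm, Complex.normSq_apply]
  simp only [Complex.sub_re, Complex.add_re, Complex.sub_im, Complex.add_im, Complex.mul_re,
    Complex.mul_im, Complex.I_re, Complex.I_im, Complex.cos_ofReal_re, Complex.sin_ofReal_re,
    Complex.cos_ofReal_im, Complex.sin_ofReal_im, cos_sub]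
  nlinarith [sin_sq_add_cos_sq x, sin_sq_add_cos_sq y]

theorem integral_two_sub_two_cos_sub_midpoint (a h : ℝ) :
    ∫ x in a..a + h, (2 - 2 * cos (x - (a + h / 2))) = 2 * h - 4 * sin (h / 2) := by
  rw [intervalIntegral.integral_comp_sub_right (fun x => 2 - 2 * cos x),
    intervalIntegral.integral_sub intervalIntegrable_const
      (continuous_cos.intervalIntegrable _ _ |>.const_mul 2),
    intervalIntegral.integral_const, intervalIntegral.integral_const_mul, integral_cos,
    show a - (a + h / 2) = -(h / 2) by ring, sin_neg, smul_eq_mul]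
  ring_nf

section uniformQuantizer

variable (b : ℕ)

theorem uniformQuantizer_add_cell_width (φ : ℝ) :
    uniformQuantizer b (φ + 2 * π / 2 ^ b) = uniformQuantizer b φ + 2 * π / 2 ^ b := by
  have hΔ : 2 * π / 2 ^ b ≠ 0 := by positivity
  have hshift : (φ + 2 * π / 2 ^ b + π) / (2 * π / 2 ^ b) = (φ + π) / (2 * π / 2 ^ b) + 1 := by
    field_simp
    ring
  simp only [uniformQuantizer, hshift, Int.ceil_add_one, Int.cast_add, Int.cast_one]
  ring

theorem periodic_sub_uniformQuantizer :
    Function.Periodic (fun φ => φ - uniformQuantizer b φ) (2 * π / 2 ^ b) := fun φ => by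
  simp only [uniformQuantizer_add_cell_width]
  ring

theorem uniformQuantizer_of_mem_first_cell {φ : ℝ} (hφ : φ ∈ Set.Ioc (-π) (-π + 2 * π / 2 ^ b)) :
    uniformQuantizer b φ = -π + 2 * π / 2 ^ b / 2 := by
  have hΔ : 0 < 2 * π / 2 ^ b := by positivity
  have hceil : ⌈(φ + π) / (2 * π / 2 ^ b)⌉ = 1 := by
    rw [Int.ceil_eq_iff, Int.cast_one, sub_self, lt_div_iff₀ hΔ, div_le_iff₀ hΔ]
    constructor <;> linarith [hφ.1, hφ.2]
  rw [uniformQuantizer, hceil]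
  ring

theorem eqOn_two_sub_two_cos_sub_uniformQuantizer_first_cell :
    Set.EqOn (fun φ => 2 - 2 * cos (φ - uniformQuantizer b φ))
      (fun φ => 2 - 2 * cos (φ - (-π + 2 * π / 2 ^ b / 2)))
      (Set.uIoc (-π) (-π + 2 * π / 2 ^ b)) := fun φ hφ => by
  rw [Set.uIoc_of_le (le_add_of_nonneg_right (by positivity))] at hφ
  simp only [uniformQuantizer_of_mem_first_cell b hφ]

theorem integral_two_sub_two_cos_sub_uniformQuantizer :
    ∫ φ in -π..π, (2 - 2 * cos (φ - uniformQuantizer b φ)) =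
      2 ^ b * (2 * (2 * π / 2 ^ b) - 4 * sin (2 * π / 2 ^ b / 2)) := by
  have hper : Function.Periodic (fun φ => 2 - 2 * cos (φ - uniformQuantizer b φ))
      (2 * π / 2 ^ b) :=
    (periodic_sub_uniformQuantizer b).comp fun t => 2 - 2 * cos t
  have hcell := eqOn_two_sub_two_cos_sub_uniformQuantizer_first_cell b
  have hint := hper.intervalIntegrable (by positivity)
    ((intervalIntegrable_congr hcell).mpr ((by fun_prop : Continuous _).intervalIntegrable _ _))
  have hπ : -π + ((2 ^ b : ℕ) : ℤ) • (2 * π / 2 ^ b) = π := by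
    rw [zsmul_eq_mul]
    push_cast
    field_simp
    ring
  calc ∫ φ in -π..π, (2 - 2 * cos (φ - uniformQuantizer b φ))
      = ((2 ^ b : ℕ) : ℤ) • ∫ φ in -π..-π + 2 * π / 2 ^ b,
          (2 - 2 * cos (φ - uniformQuantizer b φ)) := by
        rw [← hper.intervalIntegral_add_zsmul_eq _ _ hint, hπ]
    _ = ((2 ^ b : ℕ) : ℤ) • ∫ φ in -π..-π + 2 * π / 2 ^ b,
          (2 - 2 * cos (φ - (-π + 2 * π / 2 ^ b / 2))) := by
        rw [intervalIntegral.integral_congr_ae (Filter.Eventually.of_forall fun _ hφ => hcell hφ)]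
    _ = 2 ^ b * (2 * (2 * π / 2 ^ b) - 4 * sin (2 * π / 2 ^ b / 2)) := by
        rw [integral_two_sub_two_cos_sub_midpoint, zsmul_eq_mul]
        push_cast
        rfl

end uniformQuantizer

theorem expected_sq_error_of_phase_quantization (b : ℕ) :
    (1 / (2 * π)) * ∫ φ in Set.Ioc (-π) π,
        ‖Complex.exp (Complex.I * (φ : ℝ)) -
          Complex.exp (Complex.I * (uniformQuantizer b φ : ℝ))‖ ^ 2 =
      2 - 2 * (Real.sin (π * ((2 : ℝ) ^ b)⁻¹) / (π * ((2 : ℝ) ^ b)⁻¹)) := by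
  simp_rw [norm_exp_I_mul_sub_exp_I_mul_sq]
  rw [← intervalIntegral.integral_of_le (by linarith [pi_pos]),
    integral_two_sub_two_cos_sub_uniformQuantizer]
  have hπ : π ≠ 0 := pi_ne_zero
  field_simp
  ring_nf
end
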